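/- There exists an absolute constant C > 0 such that for every positive integer N, every constant 0 < c ≤ 1, every real z with 1 − 1/N ≤ z ≤ 1, and every N×N unitary matrix U, setting z₀ = 1 − 1/N, one has | ∑_{j : |θ_j| ≥ c/N} ( 1/(z − e^{iθ_j}) − 1/(z₀ − e^{iθ_j}) ) | ≤ (C/(cN)) · ∑_{j=1}^N 1/|z₀ − e^{iθ_j}|². -/

import Mathlib

/-!
An eigenvalue `μ = e^{iθ}` of a unitary matrix lies on the unit circle, so for real `x ≥ 0`
Jordan's inequality `1 - cos θ ≥ 2θ²/π²` gives `|θ| ≤ π |x - μ|`. When `|θ| ≥ c/N`, both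
`|z - μ|` and `|z₀ - μ|` are therefore at least `c/(πN)`, which dominates `|z - z₀| ≤ 1/N`.
Writing `a⁻¹ - b⁻¹ = a⁻¹ (b - a) b⁻¹` and using `|b| ≤ |a| + |a - b|` bounds each term of the
left-hand sum by `(1 + π)/(cN) · |z₀ - μ|⁻²`, and the terms on the right are nonnegative.
-/

open Matrix
open scoped Classical

/-- The multiset of eigenvalues of `U` (roots of its characteristic polynomial,
listed with multiplicity); each eigenvalue is `e^{iθ_j}` with `θ_j = arg` in `(-π, π]`. -/
noncomputable def eigenvalues (N : ℕ) (U : Matrix.unitaryGroup (Fin N) ℂ) : Multiset ℂ :=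
  (Matrix.charpoly (U : Matrix (Fin N) (Fin N) ℂ)).roots

open Real

open scoped Matrix.Norms.L2Operator in
theorem norm_eq_one_of_mem_eigenvalues {N : ℕ} (U : Matrix.unitaryGroup (Fin N) ℂ) {μ : ℂ}
    (hμ : μ ∈ eigenvalues N U) : ‖μ‖ = 1 :=
  spectrum.norm_eq_one_of_unitary U.2
    (Matrix.mem_spectrum_of_isRoot_charpoly (Polynomial.mem_roots'.mp hμ).2)

theorem norm_inv_sub_inv_le {𝕜 : Type*} [NormedDivisionRing 𝕜] {a b : 𝕜} (hb : b ≠ 0)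
    {δ κ : ℝ} (hab : ‖a - b‖ ≤ δ) (hδ : δ ≤ κ * ‖a‖) :
    ‖a⁻¹ - b⁻¹‖ ≤ δ * (1 + κ) / ‖b‖ ^ 2 := by
  have hδ0 : 0 ≤ δ := (norm_nonneg _).trans hab
  have ha : a ≠ 0 := by
    rintro rfl
    simp only [zero_sub, norm_neg, norm_zero, mul_zero] at hab hδ
    exact hb (norm_le_zero_iff.mp (hab.trans hδ))
  have hb_le : ‖b‖ ≤ (1 + κ) * ‖a‖ := by
    have := norm_le_norm_add_norm_sub' b a
    rw [norm_sub_rev] at this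
    linarith
  have hna := norm_pos_iff.mpr ha
  have hnb := norm_pos_iff.mpr hb
  rw [inv_sub_inv' ha hb, norm_mul, norm_mul, norm_inv, norm_inv, norm_sub_rev,
    le_div_iff₀ (by positivity)]
  calc ‖a‖⁻¹ * ‖a - b‖ * ‖b‖⁻¹ * ‖b‖ ^ 2 = ‖a - b‖ * ‖b‖ / ‖a‖ := by field_simp
    _ ≤ δ * ((1 + κ) * ‖a‖) / ‖a‖ := by gcongr
    _ = δ * (1 + κ) := by field_simp

theorem one_sub_re_le_two_mul_norm_ofReal_sub_sq {μ : ℂ} (hμ : ‖μ‖ = 1) {x : ℝ} (hx : 0 ≤ x) :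
    1 - μ.re ≤ 2 * ‖(x : ℂ) - μ‖ ^ 2 := by
  have hsq : μ.re ^ 2 + μ.im ^ 2 = 1 := by
    have h2 : ‖μ‖ ^ 2 = 1 := by rw [hμ, one_pow]
    rw [Complex.sq_norm, Complex.normSq_apply] at h2
    linarith
  rw [Complex.sq_norm, Complex.normSq_apply]
  simp only [Complex.sub_re, Complex.ofReal_re, Complex.sub_im, Complex.ofReal_im]
  rcases le_or_gt 0 μ.re with hre | hre
  · nlinarith [sq_nonneg (x - μ.re), μ.re_le_norm]
  · nlinarith [mul_nonneg hx (neg_nonneg.mpr hre.le), sq_nonneg x]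

theorem abs_arg_le_pi_mul_norm_ofReal_sub {μ : ℂ} (hμ : ‖μ‖ = 1) {x : ℝ} (hx : 0 ≤ x) :
    |μ.arg| ≤ π * ‖(x : ℂ) - μ‖ := by
  have hcos : cos μ.arg = μ.re := by
    rw [Complex.cos_arg (norm_ne_zero_iff.mp (by simp [hμ])), hμ, div_one]
  have hjordan := cos_le_one_sub_mul_cos_sq (Complex.abs_arg_le_pi μ)
  have hdist := one_sub_re_le_two_mul_norm_ofReal_sub_sq hμ hx
  rw [hcos] at hjordan
  have hsq : 2 / π ^ 2 * μ.arg ^ 2 ≤ 2 * ‖(x : ℂ) - μ‖ ^ 2 := by linarith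
  rw [div_mul_eq_mul_div, div_le_iff₀ (by positivity)] at hsq
  exact abs_le_of_sq_le_sq (by linarith) (by positivity)

theorem Multiset.norm_sum_map_filter_le {α E : Type*} [SeminormedAddCommGroup E]
    (s : Multiset α) (p : α → Prop) [DecidablePred p] (f : α → E) (h : α → ℝ)
    (hh : ∀ x ∈ s, 0 ≤ h x) (hfh : ∀ x ∈ s.filter p, ‖f x‖ ≤ h x) :
    ‖((s.filter p).map f).sum‖ ≤ (s.map h).sum := by
  calc ‖((s.filter p).map f).sum‖ ≤ ((s.filter p).map fun x => ‖f x‖).sum := by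
        simpa only [Multiset.map_map, Function.comp_def] using
          norm_multiset_sum_le ((s.filter p).map f)
    _ ≤ ((s.filter p).map h).sum := Multiset.sum_map_le_sum_map _ _ hfh
    _ ≤ (s.map h).sum := by
        conv_rhs => rw [← Multiset.filter_add_not p s, Multiset.map_add, Multiset.sum_add]
        refine le_add_of_nonneg_right (Multiset.sum_nonneg fun y hy => ?_)
        obtain ⟨x, hx, rfl⟩ := Multiset.mem_map.mp hy
        exact hh x (Multiset.mem_of_mem_filter hx)

theorem norm_inv_ofReal_sub_sub_inv_le {μ : ℂ} (hμ : ‖μ‖ = 1) {x y δ t : ℝ} (hx : 0 ≤ x)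
    (hy : 0 ≤ y) (hxy : |x - y| ≤ δ) (ht : 0 < t) (htμ : t ≤ |μ.arg|) :
    ‖((x : ℂ) - μ)⁻¹ - ((y : ℂ) - μ)⁻¹‖ ≤ δ * (1 + π * δ / t) / ‖(y : ℂ) - μ‖ ^ 2 := by
  have hδ : 0 ≤ δ := (abs_nonneg _).trans hxy
  have hxμ := htμ.trans (abs_arg_le_pi_mul_norm_ofReal_sub hμ hx)
  have hyμ := htμ.trans (abs_arg_le_pi_mul_norm_ofReal_sub hμ hy)
  refine norm_inv_sub_inv_le ?_ ?_ ?_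
  · refine norm_ne_zero_iff.mp (ne_of_gt ?_)
    nlinarith [pi_pos, norm_nonneg ((y : ℂ) - μ)]
  · rwa [sub_sub_sub_cancel_right, ← Complex.ofReal_sub, Complex.norm_real, Real.norm_eq_abs]
  · calc δ = δ * (t / t) := by rw [div_self ht.ne', mul_one]
      _ ≤ δ * (π * ‖(x : ℂ) - μ‖ / t) := by gcongr
      _ = π * δ / t * ‖(x : ℂ) - μ‖ := by ring

/-- There is an absolute constant `C > 0` such that for every `N ≥ 1`, every
`0 < c ≤ 1`, every real `1 - 1/N ≤ z ≤ 1` and every unitary `U`, with `z₀ = 1 - 1/N`,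
`|∑_{j : |θ_j| ≥ c/N} (1/(z - e^{iθ_j}) - 1/(z₀ - e^{iθ_j}))|
  ≤ (C/(cN)) ∑_{j=1}^N 1/|z₀ - e^{iθ_j}|²`. -/
theorem X2_pointwise_bound :
    ∃ C : ℝ, 0 < C ∧
      ∀ (N : ℕ), 0 < N → ∀ c : ℝ, 0 < c → c ≤ 1 →
        ∀ z : ℝ, 1 - 1 / N ≤ z → z ≤ 1 →
          ∀ (U : Matrix.unitaryGroup (Fin N) ℂ),
            ‖
                (((eigenvalues N U).filter (fun lam => c / N ≤ |Complex.arg lam|)).map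
                  (fun lam =>
                    ((z : ℂ) - lam)⁻¹ - (((1 - 1 / N : ℝ) : ℂ) - lam)⁻¹)).sum‖
              ≤ C / (c * N) *
                (((eigenvalues N U).map
                  (fun lam => (‖((1 - 1 / N : ℝ) : ℂ) - lam‖ ^ 2)⁻¹)).sum) := by
  refine ⟨1 + π, by positivity, fun N hN_pos c hc hc1 z hz₀ hz₁ U => ?_⟩
  have hN : (1 : ℝ) ≤ N := Nat.one_le_cast.mpr hN_pos
  have hz₀_nonneg : 0 ≤ 1 - 1 / (N : ℝ) := sub_nonneg.mpr (div_le_one_of_le₀ hN (by positivity))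
  rw [← Multiset.sum_map_mul_left]
  refine Multiset.norm_sum_map_filter_le _ _ _ _ (fun _ _ => by positivity) fun μ hμ => ?_
  obtain ⟨hμU, hμarg⟩ := Multiset.mem_filter.mp hμ
  calc _ ≤ 1 / N * (1 + π * (1 / N) / (c / N)) / ‖((1 - 1 / N : ℝ) : ℂ) - μ‖ ^ 2 :=
        norm_inv_ofReal_sub_sub_inv_le (norm_eq_one_of_mem_eigenvalues U hμU)
          (hz₀_nonneg.trans hz₀) hz₀_nonneg (by rw [abs_le]; constructor <;> linarith)
          (by positivity) hμarg
    _ ≤ (1 + π) / (c * N) * (‖((1 - 1 / N : ℝ) : ℂ) - μ‖ ^ 2)⁻¹ := by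
        rw [div_eq_mul_inv]
        gcongr
        calc 1 / (N : ℝ) * (1 + π * (1 / N) / (c / N)) = (c + π) / (c * N) := by field_simp
          _ ≤ (1 + π) / (c * N) := by gcongr
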